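/- Let λ be an infinite cardinal. Any two disjoint subsets of λ*, each of cardinality smaller than the cofinality of λ, can be separated by disjoint open subsets of λ* (in the topology generated by the ε-neighborhoods). -/

import Mathlib

open Cardinal Topology

/-! Fewer than `cf λ` finite sequences only use entries below some `ε < λ`. For such an `ε`,
the neighbourhoods `[y]_ε` and `[z]_ε` of distinct `y` and `z` are disjoint: a common point `ρ`
extends both, so one of them, say `y`, is a proper initial segment of the other, and then
`ρ(|y|) = z(|y|) < ε` contradicts `ρ ∈ [y]_ε`. -/

/-- For a cardinal `λ`, `λ*` is the set of finite sequences of elements of `λ`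
(ordinals less than `λ`), represented as lists over the canonical type of order
type `λ` (i.e. `l.ord.toType`, whose elements correspond to the ordinals `< λ`). -/
abbrev LambdaStar (l : Cardinal) : Type _ := List l.ord.ToType

/-- The `ε`-neighborhood `[η]_ε = {η} ∪ {ρ ∈ λ* : η ⊂ ρ and ρ(|η|) ≥ ε}` of `η ∈ λ*`,
where `η ⊂ ρ` means that `η` is a proper initial segment of `ρ`, and `|η|` is the
length of `η`. The parameter `ε` ranges over `l.ord.toType`, i.e. over the ordinals `< λ`. -/
def epsNbhd (l : Cardinal) (η : LambdaStar l) (ε : l.ord.ToType) : Set (LambdaStar l) :=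
  {η} ∪ {ρ : LambdaStar l |
    List.IsPrefix η ρ ∧ ∃ h : η.length < ρ.length, ε ≤ ρ.get ⟨η.length, h⟩}

/-- The topology on `λ*` generated by the subbase consisting of the `ε`-neighborhoods
`[η]_ε` for `η ∈ λ*` and `ε < λ`. -/
def lambdaStarTopology (l : Cardinal) : TopologicalSpace (LambdaStar l) :=
  TopologicalSpace.generateFrom
    {s : Set (LambdaStar l) | ∃ (η : LambdaStar l) (ε : l.ord.ToType), s = epsNbhd l η ε}

section Cofinality

variable {α : Type*} [LinearOrder α]

theorem exists_forall_mem_lt_of_mk_lt_cof [Nonempty α] [NoMaxOrder α] {S : Set (List α)}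
    (hS : #S < Order.cof α) : ∃ ε, ∀ η ∈ S, ∀ x ∈ η, x < ε := by
  have hbdd : ¬ IsCofinal (⋃ η : S, {x | x ∈ (η : List α)}) := fun hcof => by
    obtain ⟨η, hη⟩ := isCofinal_of_isCofinal_iUnion hcof hS
    exact not_isCofinal_iff_bddAbove.2 (List.finite_toSet (η : List α)).bddAbove hη
  obtain ⟨ε, hε⟩ := not_isCofinal_iff.1 hbdd
  exact ⟨ε, fun η hη x hx => hε x (Set.mem_iUnion.2 ⟨⟨η, hη⟩, hx⟩)⟩

end Cofinality

section EpsNbhd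

variable {l : Cardinal} {η ρ y z : LambdaStar l} {ε : l.ord.ToType}

theorem self_mem_epsNbhd : η ∈ epsNbhd l η ε := Or.inl rfl

theorem isPrefix_of_mem_epsNbhd (h : ρ ∈ epsNbhd l η ε) : η <+: ρ := by
  rcases h with rfl | ⟨h, -⟩
  exacts [List.prefix_refl ρ, h]

theorem isOpen_epsNbhd : IsOpen[lambdaStarTopology l] (epsNbhd l η ε) :=
  TopologicalSpace.isOpen_generateFrom_of_mem ⟨η, ε, rfl⟩

theorem disjoint_epsNbhd_of_isPrefix (hyz : y <+: z) (hlen : y.length < z.length)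
    (hz : ∀ x ∈ z, x < ε) : Disjoint (epsNbhd l y ε) (epsNbhd l z ε) := by
  refine Set.disjoint_left.2 fun ρ hρy hρz => ?_
  have hzρ := isPrefix_of_mem_epsNbhd hρz
  rcases hρy with rfl | ⟨-, hρlen, hερ⟩
  · exact hlen.not_ge hzρ.length_le
  · have : ρ.get ⟨y.length, hρlen⟩ = z[y.length] := by simpa using (hzρ.getElem hlen).symm
    exact (hz _ (List.getElem_mem hlen)).not_ge (this ▸ hερ)

theorem disjoint_epsNbhd (hne : y ≠ z) (hy : ∀ x ∈ y, x < ε) (hz : ∀ x ∈ z, x < ε) :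
    Disjoint (epsNbhd l y ε) (epsNbhd l z ε) := by
  refine Set.disjoint_left.2 fun ρ hρy hρz => ?_
  rcases List.prefix_or_prefix_of_prefix (isPrefix_of_mem_epsNbhd hρy)
    (isPrefix_of_mem_epsNbhd hρz) with hyz | hzy
  · have hlen := hyz.length_le.lt_of_ne fun h => hne (hyz.eq_of_length h)
    exact Set.disjoint_left.1 (disjoint_epsNbhd_of_isPrefix hyz hlen hz) hρy hρz
  · have hlen := hzy.length_le.lt_of_ne fun h => hne (hzy.eq_of_length h).symm
    exact Set.disjoint_left.1 (disjoint_epsNbhd_of_isPrefix hzy hlen hy) hρz hρy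

end EpsNbhd

/-- Let `λ` be an infinite cardinal. Any two disjoint subsets of `λ*`, each of cardinality
smaller than the cofinality of `λ`, can be separated by disjoint open subsets of `λ*`
(in the topology generated by the `ε`-neighborhoods). -/
theorem stmt10 (l : Cardinal) (hl : ℵ₀ ≤ l) (Y Z : Set (LambdaStar l))
    (hY : #Y < l.ord.cof) (hZ : #Z < l.ord.cof) (hYZ : Disjoint Y Z) :
    ∃ U V : Set (LambdaStar l),
      @IsOpen (LambdaStar l) (lambdaStarTopology l) U ∧
      @IsOpen (LambdaStar l) (lambdaStarTopology l) V ∧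
      Y ⊆ U ∧ Z ⊆ V ∧ Disjoint U V := by
  have := Cardinal.noMaxOrder hl
  have : Nonempty l.ord.ToType :=
    Ordinal.nonempty_toType_iff.2 (Cardinal.ord_pos.2 (aleph0_pos.trans_le hl)).ne'
  rw [← Ordinal.cof_toType] at hY hZ
  obtain ⟨εY, hεY⟩ := exists_forall_mem_lt_of_mk_lt_cof hY
  obtain ⟨εZ, hεZ⟩ := exists_forall_mem_lt_of_mk_lt_cof hZ
  set ε := max εY εZ
  refine ⟨⋃ y ∈ Y, epsNbhd l y ε, ⋃ z ∈ Z, epsNbhd l z ε,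
    @isOpen_biUnion _ _ (lambdaStarTopology l) _ _ fun _ _ => isOpen_epsNbhd,
    @isOpen_biUnion _ _ (lambdaStarTopology l) _ _ fun _ _ => isOpen_epsNbhd,
    fun y hy => Set.mem_biUnion hy self_mem_epsNbhd,
    fun z hz => Set.mem_biUnion hz self_mem_epsNbhd, ?_⟩
  simp only [Set.disjoint_iUnion_left, Set.disjoint_iUnion_right]
  exact fun z hz y hy => disjoint_epsNbhd (hYZ.ne_of_mem hy hz)
    (fun x hx => (hεY y hy x hx).trans_le (le_max_left _ _))
    (fun x hx => (hεZ z hz x hx).trans_le (le_max_right _ _))
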